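/- For every natural number N ≥ 150000, one has 14 · 2^{ω(N)} + (1/2) · 2^{ω(N)} · √N < ψ(N) / 24, where ω(N) is the number of distinct prime divisors of N and ψ(N) = N · ∏_{p | N, p prime} (1 + 1/p). (This is the key inequality showing that the trace of the normalized Hecke operator T'_4 on S_k(Γ_0(N)) is positive for all N ≥ 150000 and even k ≥ 2.) -/

import Mathlib

/-!
Multiplying by `24` and squaring, the inequality becomes
`4^ω (336 + 12√N)² < ψ(N)²`, and `ψ(N)² = 4^ω · N · R(N)` where
`R(N) = psiRatio N = N ∏_{p ∣ N} ((1 + 1/p)/2)²`. Since `(336 + 12√N)² < 166 N` for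
`N ≥ 150000`, it suffices to show `R(N) ≥ 166`. Writing `N = ∏ p^a` and using `p^a ≥ p` gives two lower bounds,
`R(N) ≥ ∏_{p ∣ N} p ((1 + 1/p)/2)²` and `R(N)² ≥ N ∏_{p ∣ N} p ((1 + 1/p)/2)⁴`.
If `2, 3, 5, 7 ∣ N` and `N` has at least three further prime factors, the first bound suffices;
if it has at most two, `R(N) ≥ N · 4⁻² ∏_{p ≤ 7} ((1 + 1/p)/2)²` does. Otherwise one of
`2, 3, 5, 7` is missing, and since the factors of the second bound are `≥ 1` for `p ≥ 13`,
that bound is at least `150000` times a product over four of the primes `2, …, 11`.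
-/

open Real Finset

noncomputable def psiWeight (p : ℕ) : ℝ := ((1 + 1 / (p : ℝ)) / 2) ^ 2

noncomputable def psiRatio (N : ℕ) : ℝ := N * ∏ p ∈ N.primeFactors, psiWeight p

lemma sq_natCast_mul_prod_eq_psiRatio (N : ℕ) :
    ((N : ℝ) * ∏ p ∈ N.primeFactors, (1 + 1 / (p : ℝ))) ^ 2
      = 4 ^ N.primeFactors.card * (N * psiRatio N) := by
  simp only [psiRatio, psiWeight, div_pow, prod_div_distrib, prod_const, prod_pow]
  field_simp
  ring

lemma quarter_le_psiWeight (p : ℕ) : 1 / 4 ≤ psiWeight p := by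
  have : (1 : ℝ) ≤ 1 + 1 / p := by simp
  unfold psiWeight
  nlinarith

lemma le_mul_psiWeight_of_eleven_le {p : ℕ} (hp : 11 ≤ p) : 36 / 11 ≤ p * psiWeight p := by
  have hp' : (11 : ℝ) ≤ p := by exact_mod_cast hp
  have : (p : ℝ) * psiWeight p = (p + 1) ^ 2 / (4 * p) := by
    unfold psiWeight; field_simp; norm_num
  rw [this, div_le_div_iff₀ (by norm_num) (by positivity)]
  nlinarith

lemma one_le_mul_psiWeight_sq {p : ℕ} (hp : 13 ≤ p) : 1 ≤ p * psiWeight p ^ 2 := by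
  have hp' : (13 : ℝ) ≤ p := by exact_mod_cast hp
  have : (p : ℝ) * psiWeight p ^ 2 = (p + 1) ^ 4 / (16 * p ^ 3) := by
    unfold psiWeight; field_simp; norm_num
  rw [this, one_le_div (by positivity)]
  nlinarith [pow_pos (show (0 : ℝ) < p by linarith) 3]

lemma Nat.Prime.eleven_le_of_notMem {p : ℕ} (hp : p.Prime)
    (h : p ∉ ({2, 3, 5, 7} : Finset ℕ)) : 11 ≤ p := by
  by_contra! h'
  interval_cases p <;> simp_all (decide := true)

lemma Nat.Prime.thirteen_le_of_notMem {p : ℕ} (hp : p.Prime)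
    (h : p ∉ ({2, 3, 5, 7, 11} : Finset ℕ)) : 13 ≤ p := by
  by_contra! h'
  interval_cases p <;> simp_all (decide := true)

section Factorization

variable {R : Type*} [CommSemiring R]

lemma natCast_mul_prod_eq_prod_pow_factorization_mul {N : ℕ} (hN : N ≠ 0) (c : ℕ → R) :
    (N : R) * ∏ p ∈ N.primeFactors, c p
      = ∏ p ∈ N.primeFactors, (p : R) ^ N.factorization p * c p := by
  rw [prod_mul_distrib]
  congr 1
  nth_rw 1 [Nat.prod_primeFactors_pow_factorization hN]
  push_cast
  rfl

lemma prod_mul_le_prod_pow_factorization_mul [PartialOrder R] [IsOrderedRing R] {N : ℕ}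
    {c : ℕ → R} (hc : ∀ p ∈ N.primeFactors, 0 ≤ c p) :
    ∏ p ∈ N.primeFactors, (p : R) * c p
      ≤ ∏ p ∈ N.primeFactors, (p : R) ^ N.factorization p * c p := by
  refine prod_le_prod (fun p hp => mul_nonneg (Nat.cast_nonneg p) (hc p hp)) fun p hp => ?_
  have hp1 : (1 : R) ≤ p := by
    simpa using Nat.mono_cast (α := R) (Nat.prime_of_mem_primeFactors hp).one_le
  have ha : N.factorization p ≠ 0 := by
    rwa [← Finsupp.mem_support_iff, Nat.support_factorization]
  exact mul_le_mul_of_nonneg_right (le_self_pow₀ hp1 ha) (hc p hp)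

end Factorization

lemma prod_mul_psiWeight_le_psiRatio {N : ℕ} (hN : N ≠ 0) :
    ∏ p ∈ N.primeFactors, (p : ℝ) * psiWeight p ≤ psiRatio N := by
  rw [psiRatio, natCast_mul_prod_eq_prod_pow_factorization_mul hN]
  exact prod_mul_le_prod_pow_factorization_mul fun p _ => sq_nonneg _

lemma natCast_mul_prod_mul_psiWeight_sq_le_psiRatio_sq {N : ℕ} (hN : N ≠ 0) :
    N * ∏ p ∈ N.primeFactors, (p : ℝ) * psiWeight p ^ 2 ≤ psiRatio N ^ 2 :=
  calc (N : ℝ) * ∏ p ∈ N.primeFactors, (p : ℝ) * psiWeight p ^ 2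
      ≤ N * ∏ p ∈ N.primeFactors, (p : ℝ) ^ N.factorization p * psiWeight p ^ 2 :=
        mul_le_mul_of_nonneg_left
          (prod_mul_le_prod_pow_factorization_mul fun p _ => sq_nonneg _) (Nat.cast_nonneg N)
    _ = N * (N * ∏ p ∈ N.primeFactors, psiWeight p ^ 2) := by
        rw [← natCast_mul_prod_eq_prod_pow_factorization_mul hN]
    _ = psiRatio N ^ 2 := by rw [psiRatio, prod_pow]; ring

lemma le_psiRatio_of_many_primeFactors {N : ℕ} (hT : {2, 3, 5, 7} ⊆ N.primeFactors)
    (hk : 3 ≤ #(N.primeFactors \ {2, 3, 5, 7})) : 166 ≤ psiRatio N := by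
  have hN : N ≠ 0 := (Nat.mem_primeFactors.1 (hT (show 2 ∈ _ by simp))).2.2
  have hrest : (36 / 11 : ℝ) ^ 3 ≤ ∏ p ∈ N.primeFactors \ {2, 3, 5, 7}, (p : ℝ) * psiWeight p :=
    calc (36 / 11 : ℝ) ^ 3 ≤ (36 / 11) ^ #(N.primeFactors \ {2, 3, 5, 7}) :=
          pow_le_pow_right₀ (by norm_num) hk
      _ = ∏ _p ∈ N.primeFactors \ {2, 3, 5, 7}, (36 / 11 : ℝ) := (prod_const _).symm
      _ ≤ ∏ p ∈ N.primeFactors \ {2, 3, 5, 7}, (p : ℝ) * psiWeight p := by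
          refine prod_le_prod (fun _ _ => by norm_num) fun p hp => ?_
          rw [mem_sdiff] at hp
          exact le_mul_psiWeight_of_eleven_le
            ((Nat.prime_of_mem_primeFactors hp.1).eleven_le_of_notMem hp.2)
  calc (166 : ℝ) ≤ (36 / 11) ^ 3 * (216 / 35) := by norm_num
    _ ≤ (∏ p ∈ N.primeFactors \ {2, 3, 5, 7}, (p : ℝ) * psiWeight p)
          * ∏ p ∈ ({2, 3, 5, 7} : Finset ℕ), (p : ℝ) * psiWeight p := by
        gcongr
        norm_num [psiWeight]
    _ = ∏ p ∈ N.primeFactors, (p : ℝ) * psiWeight p := prod_sdiff hT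
    _ ≤ psiRatio N := prod_mul_psiWeight_le_psiRatio hN

lemma le_psiRatio_of_few_primeFactors {N : ℕ} (hN : 150000 ≤ N)
    (hT : {2, 3, 5, 7} ⊆ N.primeFactors) (hk : #(N.primeFactors \ {2, 3, 5, 7}) ≤ 2) :
    166 ≤ psiRatio N := by
  have hrest : (1 / 4 : ℝ) ^ 2 ≤ ∏ p ∈ N.primeFactors \ {2, 3, 5, 7}, psiWeight p :=
    calc (1 / 4 : ℝ) ^ 2 ≤ (1 / 4) ^ #(N.primeFactors \ {2, 3, 5, 7}) :=
          pow_le_pow_of_le_one (by norm_num) (by norm_num) hk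
      _ = ∏ _p ∈ N.primeFactors \ {2, 3, 5, 7}, (1 / 4 : ℝ) := (prod_const _).symm
      _ ≤ ∏ p ∈ N.primeFactors \ {2, 3, 5, 7}, psiWeight p :=
          prod_le_prod (fun _ _ => by norm_num) fun p _ => quarter_le_psiWeight p
  calc (166 : ℝ) ≤ 150000 * ((1 / 4) ^ 2 * (36 / 1225)) := by norm_num
    _ ≤ N * ((∏ p ∈ N.primeFactors \ {2, 3, 5, 7}, psiWeight p)
          * ∏ p ∈ ({2, 3, 5, 7} : Finset ℕ), psiWeight p) := by
        gcongr
        · exact_mod_cast hN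
        · norm_num [psiWeight]
    _ = psiRatio N := by rw [prod_sdiff hT, psiRatio]

lemma le_psiRatio_of_notMem_primeFactors {N q : ℕ} (hN : 150000 ≤ N)
    (hq : q ∈ ({2, 3, 5, 7} : Finset ℕ)) (hqN : q ∉ N.primeFactors) : 166 ≤ psiRatio N := by
  set V : Finset ℕ := {2, 3, 5, 7, 11}
  set e : ℕ → ℝ := fun p => p * psiWeight p ^ 2
  have he_nonneg : ∀ p, 0 ≤ e p := fun p => by positivity
  have he_le_one : ∀ p ∈ V, e p ≤ 1 := by
    simp only [V, e, mem_insert, mem_singleton, forall_eq_or_imp, forall_eq]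
    norm_num [psiWeight]
  have hV : (166 : ℝ) ^ 2 ≤ 150000 * ∏ p ∈ V.erase q, e p := by
    revert q
    simp only [V, e, mem_insert, mem_singleton, forall_eq_or_imp, forall_eq]
    norm_num [psiWeight, erase_insert_of_ne]
  have hsub : N.primeFactors ∩ V ⊆ V.erase q := fun p hp => by
    rw [mem_inter] at hp
    exact mem_erase.2 ⟨fun h => hqN (h ▸ hp.1), hp.2⟩
  have hV_le : ∏ p ∈ V.erase q, e p ≤ ∏ p ∈ N.primeFactors, e p :=
    calc ∏ p ∈ V.erase q, e p ≤ ∏ p ∈ N.primeFactors ∩ V, e p :=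
          prod_le_prod_of_subset_of_le_one hsub (fun p _ => he_nonneg p)
            fun p hp _ => he_le_one p (mem_of_mem_erase hp)
      _ ≤ ∏ p ∈ N.primeFactors, e p :=
          prod_le_prod_of_subset_of_one_le inter_subset_left (fun p _ => he_nonneg p)
            fun p hp hpV => one_le_mul_psiWeight_sq <|
              (Nat.prime_of_mem_primeFactors hp).thirteen_le_of_notMem
                fun h => hpV (mem_inter.2 ⟨hp, h⟩)
  have hsq : (166 : ℝ) ^ 2 ≤ psiRatio N ^ 2 :=
    calc (166 : ℝ) ^ 2 ≤ 150000 * ∏ p ∈ V.erase q, e p := hV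
      _ ≤ N * ∏ p ∈ N.primeFactors, e p := by
          gcongr
          exact_mod_cast hN
      _ ≤ psiRatio N ^ 2 := natCast_mul_prod_mul_psiWeight_sq_le_psiRatio_sq (by omega)
  have hpos : 0 ≤ psiRatio N := by unfold psiRatio psiWeight; positivity
  exact (pow_le_pow_iff_left₀ (by norm_num) hpos two_ne_zero).1 hsq

theorem le_psiRatio {N : ℕ} (hN : 150000 ≤ N) : 166 ≤ psiRatio N := by
  by_cases hT : {2, 3, 5, 7} ⊆ N.primeFactors
  · rcases le_or_gt 3 #(N.primeFactors \ {2, 3, 5, 7}) with hk | hk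
    · exact le_psiRatio_of_many_primeFactors hT hk
    · exact le_psiRatio_of_few_primeFactors hN hT (by omega)
  · obtain ⟨q, hq, hqN⟩ := not_subset.1 hT
    exact le_psiRatio_of_notMem_primeFactors hN hq hqN

/-- For every natural number `N ≥ 150000`,
`14 · 2^{ω(N)} + (1/2) · 2^{ω(N)} · √N < ψ(N) / 24`, where `ω(N)` is the number of
distinct prime divisors of `N` and `ψ(N) = N · ∏_{p ∣ N} (1 + 1/p)`. -/
theorem trace_T4_key_inequality (N : ℕ) (hN : 150000 ≤ N) :
    14 * (2 : ℝ) ^ N.primeFactors.card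
        + (1 / 2) * (2 : ℝ) ^ N.primeFactors.card * Real.sqrt N
      < ((N : ℝ) * ∏ p ∈ N.primeFactors, (1 + 1 / (p : ℝ))) / 24 := by
  set ω := N.primeFactors.card
  set s := √(N : ℝ)
  have hs : s ^ 2 = N := sq_sqrt (Nat.cast_nonneg N)
  have h387 : 387 ≤ s := le_sqrt_of_sq_le (by norm_num; exact_mod_cast (by omega : 149769 ≤ N))
  -- `166` is the first integer above `(12 + 336 / 387) ^ 2 ≈ 165.6`.
  have hs_sq : (336 + 12 * s) ^ 2 < 166 * s ^ 2 := by nlinarith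
  have hψ : 0 ≤ (N : ℝ) * ∏ p ∈ N.primeFactors, (1 + 1 / (p : ℝ)) := by positivity
  have key : (2 : ℝ) ^ ω * (336 + 12 * s) < N * ∏ p ∈ N.primeFactors, (1 + 1 / (p : ℝ)) := by
    refine lt_of_pow_lt_pow_left₀ 2 hψ ?_
    calc ((2 : ℝ) ^ ω * (336 + 12 * s)) ^ 2 = 4 ^ ω * (336 + 12 * s) ^ 2 := by
          rw [mul_pow, ← pow_mul, mul_comm ω, pow_mul]; norm_num
      _ < 4 ^ ω * (166 * s ^ 2) := by gcongr
      _ ≤ 4 ^ ω * (N * psiRatio N) := by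
          rw [hs, mul_comm (166 : ℝ)]; gcongr; exact le_psiRatio hN
      _ = _ := (sq_natCast_mul_prod_eq_psiRatio N).symm
  linarith
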